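/- arXiv:1504.06146 — 4 statements merged into one kernel-verified Lean document; each statement's English description precedes it below -/
import Mathlib

section
/- Let T > 0 and let 𝒫 be a nonempty family of Borel probability measures on the path space C([0,T]; ℝ^d) with the supremum norm. Let g : C([0,T]; ℝ^d) → ℝ be bounded and admit a concave, nondecreasing modulus of continuity ρ with ρ(0)=0, i.e. |g(ω) − g(ω')| ≤ ρ(‖ω − ω'‖_∞). Let 0 = t_0 < ⋯ < t_n = T be a partition of mesh at most ε, and for ω ∈ C([0,T]; ℝ^d) let Γ^ε(ω) denote the piecewise linear interpolation of the points (t_i, ω(t_i)). Assume the random variable ω ↦ w_ω(ε) := sup{‖ω(s) − ω(t)‖ : s,t ∈ [0,T], |s−t| ≤ ε} satisfies sup_{P ∈ 𝒫} ∫ w_ω(ε) dP(ω) < ∞. Then | sup_{P ∈ 𝒫} ∫ g(Γ^ε(ω)) dP(ω) − sup_{P ∈ 𝒫} ∫ g(ω) dP(ω) | ≤ ρ( sup_{P ∈ 𝒫} ∫ w_ω(ε) dP(ω) ). -/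
/-!
Each `Γ ω s` is a convex combination of values of `ω` at times `ε`-close to `s`, so
`‖Γ ω - ω‖ ≤ w_ω(ε)`. Hence `|E[g ∘ Γ] - E[g]| ≤ E[ρ(w(ε))] ≤ ρ(E[w(ε)])` by Jensen's inequality
for the concave `ρ`, and monotonicity of `ρ` bounds this by `ρ` of the worst-case expectation.
A uniform bound on the differences of the integrals passes to the difference of the suprema.
-/

open MeasureTheory Filter Set Topology

section BoundedSupremum

variable {ι : Type*} {s : Set ι} {f g : ι → ℝ}

lemma bddAbove_range_iSup_mem (hf : BddAbove (f '' s)) :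
    BddAbove (range fun i => ⨆ _ : i ∈ s, f i) := by
  obtain ⟨B, hB⟩ := hf
  refine ⟨max B 0, ?_⟩
  rintro _ ⟨i, rfl⟩
  exact Real.iSup_le (fun hi => le_max_of_le_left (hB (mem_image_of_mem f hi))) (le_max_right _ _)

lemma le_biSup_of_mem (hf : BddAbove (f '' s)) {i : ι} (hi : i ∈ s) : f i ≤ ⨆ i ∈ s, f i := by
  simpa only [ciSup_pos hi] using le_ciSup (bddAbove_range_iSup_mem hf) i

lemma biSup_le_biSup_add [Nonempty ι] {c : ℝ} (hg : BddAbove (g '' s)) (hc : 0 ≤ c)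
    (h : ∀ i ∈ s, f i ≤ g i + c) : ⨆ i ∈ s, f i ≤ (⨆ i ∈ s, g i) + c := by
  refine ciSup_le fun i =>
    le_trans ?_ (add_le_add_left (le_ciSup (bddAbove_range_iSup_mem hg) i) c)
  -- outside `s` both inner suprema take the junk value `sSup ∅ = 0`, hence `0 ≤ c`
  by_cases hi : i ∈ s
  · simpa only [ciSup_pos hi] using h i hi
  · simp [hi, hc]

lemma abs_biSup_sub_biSup_le [Nonempty ι] {c : ℝ} (hf : BddAbove (f '' s))
    (hg : BddAbove (g '' s)) (hc : 0 ≤ c) (h : ∀ i ∈ s, |f i - g i| ≤ c) :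
    |(⨆ i ∈ s, f i) - ⨆ i ∈ s, g i| ≤ c := by
  rw [abs_sub_le_iff, sub_le_iff_le_add', sub_le_iff_le_add']
  exact ⟨biSup_le_biSup_add hg hc fun i hi => by linarith [(abs_sub_le_iff.1 (h i hi)).1],
    biSup_le_biSup_add hf hc fun i hi => by linarith [(abs_sub_le_iff.1 (h i hi)).2]⟩

end BoundedSupremum

lemma bddAbove_integral_image {Ω : Type*} [MeasurableSpace Ω] {PP : Set (Measure Ω)}
    (hprob : ∀ P ∈ PP, IsProbabilityMeasure P) {f : Ω → ℝ} {C : ℝ} (hf : ∀ ω, |f ω| ≤ C) :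
    BddAbove ((fun P => ∫ ω, f ω ∂P) '' PP) := by
  refine ⟨C, ?_⟩
  rintro _ ⟨P, hP, rfl⟩
  have := hprob P hP
  have h := norm_integral_le_of_norm_le_const (μ := P) (f := f) (ae_of_all _ hf)
  rw [probReal_univ, mul_one, Real.norm_eq_abs] at h
  exact (le_abs_self _).trans h

lemma ConcaveOn.le_add_mul_of_monotoneOn {ρ : ℝ → ℝ} (hρc : ConcaveOn ℝ (Ici 0) ρ)
    (hρm : MonotoneOn ρ (Ici 0)) {x : ℝ} (hx : 0 ≤ x) : ρ x ≤ ρ 1 + (ρ 1 - ρ 0) * x := by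
  have h1 : (1 : ℝ) ∈ Ici 0 := mem_Ici.2 zero_le_one
  have h01 : 0 ≤ ρ 1 - ρ 0 := sub_nonneg.2 (hρm self_mem_Ici h1 zero_le_one)
  rcases le_or_gt x 1 with hx1 | hx1
  · nlinarith [hρm hx h1 hx1]
  · have hslope := hρc.slope_anti_adjacent self_mem_Ici hx zero_lt_one hx1
    rw [sub_zero, div_one, div_le_iff₀ (by linarith)] at hslope
    nlinarith

lemma abs_integral_sub_integral_le_of_concaveOn {Ω : Type*} [MeasurableSpace Ω] {P : Measure Ω}
    [IsProbabilityMeasure P] {F G W : Ω → ℝ} {ρ : ℝ → ℝ} (hρc : ConcaveOn ℝ (Ici 0) ρ)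
    (hρcont : ContinuousOn ρ (Ici 0)) (hρm : MonotoneOn ρ (Ici 0)) (hF : Integrable F P)
    (hG : Integrable G P) (hW : Integrable W P) (hW0 : ∀ ω, 0 ≤ W ω)
    (h : ∀ ω, |F ω - G ω| ≤ ρ (W ω)) :
    |∫ ω, F ω ∂P - ∫ ω, G ω ∂P| ≤ ρ (∫ ω, W ω ∂P) := by
  have hρW_meas : AEStronglyMeasurable (fun ω => ρ (W ω)) P := by
    -- `ρ` is only continuous on `[0, ∞)`; `W` takes values there, so clamp the argument
    have hcont : Continuous fun x => ρ (max x 0) :=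
      hρcont.comp_continuous (continuous_id.max continuous_const) fun x => le_max_right x 0
    refine (hcont.comp_aestronglyMeasurable hW.1).congr (ae_of_all _ fun ω => ?_)
    simp only [max_eq_left (hW0 ω)]
  have hρW : Integrable (fun ω => ρ (W ω)) P := by
    refine ((integrable_const (ρ 1)).add (hW.const_mul (ρ 1 - ρ 0))).mono' hρW_meas
      (ae_of_all _ fun ω => ?_)
    rw [Real.norm_eq_abs, abs_of_nonneg ((abs_nonneg _).trans (h ω))]
    exact hρc.le_add_mul_of_monotoneOn hρm (hW0 ω)
  calc |∫ ω, F ω ∂P - ∫ ω, G ω ∂P| = |∫ ω, (F ω - G ω) ∂P| := by rw [integral_sub hF hG]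
    _ ≤ ∫ ω, |F ω - G ω| ∂P := abs_integral_le_integral_abs
    _ ≤ ∫ ω, ρ (W ω) ∂P := integral_mono (hF.sub hG).abs hρW h
    _ ≤ ρ (∫ ω, W ω ∂P) :=
      hρc.le_map_integral hρcont isClosed_Ici (ae_of_all _ hW0) hW hρW

lemma continuous_of_abs_sub_le_comp_dist {X : Type*} [PseudoMetricSpace X] {g : X → ℝ}
    {ρ : ℝ → ℝ} (hρ : Tendsto ρ (𝓝[≥] 0) (𝓝 0)) (h : ∀ x y, |g x - g y| ≤ ρ (dist x y)) :
    Continuous g := by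
  refine continuous_iff_continuousAt.2 fun x => tendsto_iff_dist_tendsto_zero.2 ?_
  have hdist : Tendsto (fun y => dist y x) (𝓝 x) (𝓝[≥] 0) :=
    tendsto_nhdsWithin_iff.2 ⟨(continuous_id.dist continuous_const).tendsto' x 0 (dist_self x),
      Eventually.of_forall fun y => dist_nonneg⟩
  exact squeeze_zero (fun y => dist_nonneg) (fun y => (Real.dist_eq _ _).trans_le (h y x))
    (hρ.comp hdist)

lemma norm_add_smul_sub_le {E : Type*} [NormedAddCommGroup E] [NormedSpace ℝ E] {x y : E}
    {r θ : ℝ} (hx : ‖x‖ ≤ r) (hy : ‖y‖ ≤ r) (hθ : θ ∈ Icc (0 : ℝ) 1) :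
    ‖x + θ • (y - x)‖ ≤ r := by
  simpa using (convex_closedBall (0 : E) r).add_smul_sub_mem (by simpa using hx)
    (by simpa using hy) hθ

section Interpolation

variable {X E : Type*} [PseudoMetricSpace X] [NormedAddCommGroup E]

noncomputable def modulusOfContinuity (ε : ℝ) (ω : C(X, E)) : ℝ :=
  sSup {r : ℝ | ∃ s u : X, dist s u ≤ ε ∧ r = ‖ω s - ω u‖}

lemma modulusOfContinuity_nonneg (ε : ℝ) (ω : C(X, E)) : 0 ≤ modulusOfContinuity ε ω :=
  Real.sSup_nonneg fun _ ⟨_, _, _, hr⟩ => hr ▸ norm_nonneg _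

variable [CompactSpace X]

lemma norm_sub_le_modulusOfContinuity {ε : ℝ} (ω : C(X, E)) {s u : X} (h : dist s u ≤ ε) :
    ‖ω s - ω u‖ ≤ modulusOfContinuity ε ω := by
  refine le_csSup ⟨2 * ‖ω‖, ?_⟩ ⟨s, u, h, rfl⟩
  rintro _ ⟨s', u', -, rfl⟩
  linarith [norm_sub_le (ω s') (ω u'), ω.norm_coe_le_norm s', ω.norm_coe_le_norm u']

variable [NormedSpace ℝ E]

def IsInterpolationAtScale (ε : ℝ) (Γ : C(X, E) → C(X, E)) : Prop :=
  ∀ s, ∃ a b : X, dist a s ≤ ε ∧ dist b s ≤ ε ∧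
    ∃ θ ∈ Icc (0 : ℝ) 1, ∀ ω, Γ ω s = ω a + θ • (ω b - ω a)

lemma IsInterpolationAtScale.norm_sub_le_modulusOfContinuity {ε : ℝ} {Γ : C(X, E) → C(X, E)}
    (hΓ : IsInterpolationAtScale ε Γ) (ω : C(X, E)) : ‖Γ ω - ω‖ ≤ modulusOfContinuity ε ω := by
  refine (ContinuousMap.norm_le _ (modulusOfContinuity_nonneg ε ω)).2 fun s => ?_
  obtain ⟨a, b, ha, hb, θ, hθ, hΓs⟩ := hΓ s
  have key : (Γ ω - ω) s = (ω a - ω s) + θ • ((ω b - ω s) - (ω a - ω s)) := by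
    rw [ContinuousMap.sub_apply, hΓs]
    module
  rw [key]
  exact norm_add_smul_sub_le (_root_.norm_sub_le_modulusOfContinuity ω ha)
    (_root_.norm_sub_le_modulusOfContinuity ω hb) hθ

lemma IsInterpolationAtScale.lipschitzWith_one {ε : ℝ} {Γ : C(X, E) → C(X, E)}
    (hΓ : IsInterpolationAtScale ε Γ) : LipschitzWith 1 Γ := by
  refine LipschitzWith.of_dist_le_mul fun ω ω' => ?_
  rw [NNReal.coe_one, one_mul, ContinuousMap.dist_le dist_nonneg]
  intro s
  obtain ⟨a, b, -, -, θ, hθ, hΓs⟩ := hΓ s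
  have key : Γ ω s - Γ ω' s = (ω - ω') a + θ • ((ω - ω') b - (ω - ω') a) := by
    simp only [hΓs, ContinuousMap.sub_apply]
    module
  rw [dist_eq_norm, key, dist_eq_norm ω ω']
  exact norm_add_smul_sub_le ((ω - ω').norm_coe_le_norm a) ((ω - ω').norm_coe_le_norm b) hθ

lemma IsInterpolationAtScale.abs_integral_comp_sub_integral_le [MeasurableSpace C(X, E)]
    [OpensMeasurableSpace C(X, E)] {P : Measure C(X, E)} [IsProbabilityMeasure P] {ε C : ℝ}
    {Γ : C(X, E) → C(X, E)} {g : C(X, E) → ℝ} {ρ : ℝ → ℝ} (hΓ : IsInterpolationAtScale ε Γ)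
    (hρc : ConcaveOn ℝ (Ici 0) ρ) (hρcont : ContinuousOn ρ (Ici 0))
    (hρm : MonotoneOn ρ (Ici 0)) (hg : Continuous g) (hgb : ∀ ω, |g ω| ≤ C)
    (hmod : ∀ ω ω', |g ω - g ω'| ≤ ρ ‖ω - ω'‖) (hW : Integrable (modulusOfContinuity ε) P) :
    |∫ ω, g (Γ ω) ∂P - ∫ ω, g ω ∂P| ≤ ρ (∫ ω, modulusOfContinuity ε ω ∂P) := by
  have hgΓ : Continuous (g ∘ Γ) := hg.comp hΓ.lipschitzWith_one.continuous
  refine abs_integral_sub_integral_le_of_concaveOn hρc hρcont hρm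
    (.of_bound hgΓ.aestronglyMeasurable C (ae_of_all _ fun ω => hgb (Γ ω)))
    (.of_bound hg.aestronglyMeasurable C (ae_of_all _ hgb)) hW (modulusOfContinuity_nonneg ε)
    fun ω => (hmod _ _).trans ?_
  exact hρm (norm_nonneg _) (modulusOfContinuity_nonneg ε ω) (hΓ.norm_sub_le_modulusOfContinuity ω)

end Interpolation

lemma Fin.exists_castSucc_le_le_succ {α : Type*} [LinearOrder α] {n : ℕ} (hn : 0 < n)
    (f : Fin (n + 1) → α) {x : α} (h0 : f 0 ≤ x) (hx : x ≤ f (Fin.last n)) :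
    ∃ i : Fin n, f i.castSucc ≤ x ∧ x ≤ f i.succ := by
  induction n with
  | zero => omega
  | succ m ih =>
    by_cases hxm : x ≤ f (Fin.last m).castSucc
    · rcases m.eq_zero_or_pos with rfl | hm
      · exact ⟨0, h0, hx⟩
      · obtain ⟨i, hi⟩ := ih hm (f ∘ Fin.castSucc) h0 hxm
        exact ⟨i.castSucc, hi⟩
    · exact ⟨Fin.last m, (not_le.1 hxm).le, hx⟩

lemma isInterpolationAtScale_of_partition {E : Type*} [NormedAddCommGroup E] [NormedSpace ℝ E]
    {T ε : ℝ} {n : ℕ} (hn : 0 < n) (t : Fin (n + 1) → Icc (0 : ℝ) T) (htm : Monotone t)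
    (ht0 : (t 0 : ℝ) = 0) (htn : (t (Fin.last n) : ℝ) = T)
    (hmesh : ∀ i : Fin n, (t i.succ : ℝ) - (t i.castSucc : ℝ) ≤ ε)
    (Γ : C(Icc (0 : ℝ) T, E) → C(Icc (0 : ℝ) T, E))
    (hΓ : ∀ ω, ∀ i : Fin n, ∀ s : Icc (0 : ℝ) T,
      (t i.castSucc : ℝ) ≤ s → (s : ℝ) ≤ t i.succ →
      Γ ω s = ω (t i.castSucc) +
        (((s : ℝ) - t i.castSucc) / ((t i.succ : ℝ) - t i.castSucc)) •
          (ω (t i.succ) - ω (t i.castSucc))) :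
    IsInterpolationAtScale ε Γ := by
  intro s
  obtain ⟨i, hsi, his⟩ :=
    Fin.exists_castSucc_le_le_succ hn (fun j => (t j : ℝ)) (ht0.trans_le s.2.1)
      (s.2.2.trans htn.ge)
  have hti : (t i.castSucc : ℝ) ≤ t i.succ := htm (Fin.castSucc_le_succ i)
  refine ⟨t i.castSucc, t i.succ, ?_, ?_, _, ⟨div_nonneg (sub_nonneg.2 hsi) (sub_nonneg.2 hti),
    div_le_one_of_le₀ (sub_le_sub_right his _) (sub_nonneg.2 hti)⟩, fun ω => hΓ ω i s hsi his⟩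
  · rw [Subtype.dist_eq, Real.dist_eq, abs_sub_comm, abs_of_nonneg (sub_nonneg.2 hsi)]
    linarith [hmesh i]
  · rw [Subtype.dist_eq, Real.dist_eq, abs_of_nonneg (sub_nonneg.2 his)]
    linarith [hmesh i]

theorem interpolation_payoff_value_estimate_general
    {d : ℕ} (T ε : ℝ)
    [MeasurableSpace C(Set.Icc (0:ℝ) T, EuclideanSpace ℝ (Fin d))]
    [BorelSpace C(Set.Icc (0:ℝ) T, EuclideanSpace ℝ (Fin d))]
    (PP : Set (Measure C(Set.Icc (0:ℝ) T, EuclideanSpace ℝ (Fin d))))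
    (hprob : ∀ P ∈ PP, IsProbabilityMeasure P)
    (g : C(Set.Icc (0:ℝ) T, EuclideanSpace ℝ (Fin d)) → ℝ)
    (Cg : ℝ) (hgb : ∀ ω, |g ω| ≤ Cg)
    (ρ : ℝ → ℝ) (hρc : ConcaveOn ℝ (Set.Ici 0) ρ) (hρm : MonotoneOn ρ (Set.Ici 0))
    (hρ0 : ρ 0 = 0) (hρlim : Tendsto ρ (nhdsWithin 0 (Set.Ioi 0)) (nhds 0))
    (hmod : ∀ ω ω', |g ω - g ω'| ≤ ρ ‖ω - ω'‖)
    (n : ℕ) (hn : 0 < n) (t : Fin (n + 1) → Set.Icc (0:ℝ) T) (htm : StrictMono t)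
    (ht0 : (t 0 : ℝ) = 0) (htn : (t (Fin.last n) : ℝ) = T)
    (hmesh : ∀ i : Fin n, (t i.succ : ℝ) - (t i.castSucc : ℝ) ≤ ε)
    (Γ : C(Set.Icc (0:ℝ) T, EuclideanSpace ℝ (Fin d)) →
      C(Set.Icc (0:ℝ) T, EuclideanSpace ℝ (Fin d)))
    (hΓ : ∀ ω, ∀ i : Fin n, ∀ s : Set.Icc (0:ℝ) T,
      (t i.castSucc : ℝ) ≤ s → (s : ℝ) ≤ t i.succ →
      Γ ω s = ω (t i.castSucc) +
        (((s : ℝ) - t i.castSucc) / ((t i.succ : ℝ) - t i.castSucc)) •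
          (ω (t i.succ) - ω (t i.castSucc)))
    (W : C(Set.Icc (0:ℝ) T, EuclideanSpace ℝ (Fin d)) → ℝ)
    (hW : ∀ ω, W ω = sSup {r : ℝ | ∃ s u : Set.Icc (0:ℝ) T,
      |(s : ℝ) - (u : ℝ)| ≤ ε ∧ r = ‖ω s - ω u‖})
    (hWint : ∀ P ∈ PP, Integrable W P)
    (hWbdd : BddAbove ((fun P => ∫ ω, W ω ∂P) '' PP)) :
    |(⨆ P ∈ PP, ∫ ω, g (Γ ω) ∂P) - ⨆ P ∈ PP, ∫ ω, g ω ∂P|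
      ≤ ρ (⨆ P ∈ PP, ∫ ω, W ω ∂P) := by
  have hρ0_cont : ContinuousWithinAt ρ (Ici 0) 0 :=
    continuousWithinAt_Ioi_iff_Ici.1 (by rwa [ContinuousWithinAt, hρ0])
  have hρ_right : Tendsto ρ (𝓝[≥] 0) (𝓝 0) := by
    simpa only [ContinuousWithinAt, hρ0] using hρ0_cont
  have hg : Continuous g :=
    continuous_of_abs_sub_le_comp_dist hρ_right fun ω ω' => dist_eq_norm ω ω' ▸ hmod ω ω'
  have hΓi : IsInterpolationAtScale ε Γ :=
    isInterpolationAtScale_of_partition hn t htm.monotone ht0 htn hmesh Γ hΓ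
  obtain rfl : W = modulusOfContinuity ε := funext hW
  have hM : 0 ≤ ⨆ P ∈ PP, ∫ ω, modulusOfContinuity ε ω ∂P :=
    Real.iSup_nonneg fun _ => Real.iSup_nonneg fun _ =>
      integral_nonneg (modulusOfContinuity_nonneg ε)
  refine abs_biSup_sub_biSup_le (bddAbove_integral_image hprob fun ω => hgb (Γ ω))
    (bddAbove_integral_image hprob hgb) (hρ0.symm.trans_le (hρm self_mem_Ici hM hM))
    fun P hP => ?_
  have := hprob P hP
  refine (hΓi.abs_integral_comp_sub_integral_le hρc (hρc.continuousOn_Ici hρ0_cont) hρm hg hgb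
    hmod (hWint P hP)).trans ?_
  exact hρm (mem_Ici.2 (integral_nonneg (modulusOfContinuity_nonneg ε))) hM
    (le_biSup_of_mem hWbdd hP)

/-- Quantitative form of Lemma 3.1: replacing a path-dependent payoff `g` by its
value on the piecewise linear interpolation along a partition of mesh `ε` changes
the sublinear expectation by at most `ρ` of the worst-case expected modulus of
continuity at scale `ε`. -/
theorem interpolation_payoff_value_estimate
    {d : ℕ} (T ε : ℝ) (hT : 0 < T) (hε : 0 < ε)
    [MeasurableSpace C(Set.Icc (0:ℝ) T, EuclideanSpace ℝ (Fin d))]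
    [BorelSpace C(Set.Icc (0:ℝ) T, EuclideanSpace ℝ (Fin d))]
    (PP : Set (Measure C(Set.Icc (0:ℝ) T, EuclideanSpace ℝ (Fin d)))) (hPP : PP.Nonempty)
    (hprob : ∀ P ∈ PP, IsProbabilityMeasure P)
    (g : C(Set.Icc (0:ℝ) T, EuclideanSpace ℝ (Fin d)) → ℝ)
    (Cg : ℝ) (hgb : ∀ ω, |g ω| ≤ Cg)
    (ρ : ℝ → ℝ) (hρc : ConcaveOn ℝ (Set.Ici 0) ρ) (hρm : MonotoneOn ρ (Set.Ici 0))
    (hρ0 : ρ 0 = 0) (hρlim : Tendsto ρ (nhdsWithin 0 (Set.Ioi 0)) (nhds 0))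
    (hmod : ∀ ω ω', |g ω - g ω'| ≤ ρ ‖ω - ω'‖)
    (n : ℕ) (hn : 0 < n) (t : Fin (n + 1) → Set.Icc (0:ℝ) T) (htm : StrictMono t)
    (ht0 : (t 0 : ℝ) = 0) (htn : (t (Fin.last n) : ℝ) = T)
    (hmesh : ∀ i : Fin n, (t i.succ : ℝ) - (t i.castSucc : ℝ) ≤ ε)
    (Γ : C(Set.Icc (0:ℝ) T, EuclideanSpace ℝ (Fin d)) →
      C(Set.Icc (0:ℝ) T, EuclideanSpace ℝ (Fin d)))
    (hΓ : ∀ ω, ∀ i : Fin n, ∀ s : Set.Icc (0:ℝ) T,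
      (t i.castSucc : ℝ) ≤ s → (s : ℝ) ≤ t i.succ →
      Γ ω s = ω (t i.castSucc) +
        (((s : ℝ) - t i.castSucc) / ((t i.succ : ℝ) - t i.castSucc)) •
          (ω (t i.succ) - ω (t i.castSucc)))
    (W : C(Set.Icc (0:ℝ) T, EuclideanSpace ℝ (Fin d)) → ℝ)
    (hW : ∀ ω, W ω = sSup {r : ℝ | ∃ s u : Set.Icc (0:ℝ) T,
      |(s : ℝ) - (u : ℝ)| ≤ ε ∧ r = ‖ω s - ω u‖})
    (hWint : ∀ P ∈ PP, Integrable W P)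
    (hWbdd : BddAbove ((fun P => ∫ ω, W ω ∂P) '' PP)) :
    |(⨆ P ∈ PP, ∫ ω, g (Γ ω) ∂P) - ⨆ P ∈ PP, ∫ ω, g ω ∂P|
      ≤ ρ (⨆ P ∈ PP, ∫ ω, W ω ∂P) :=
  interpolation_payoff_value_estimate_general T ε PP hprob g Cg hgb ρ hρc hρm hρ0 hρlim hmod n hn t
    htm ht0 htn hmesh Γ hΓ W hW hWint hWbdd
end

section
/- Let T > 0, d ≥ 1, and let 𝒫 be a nonempty family of Borel probability measures on the path space C([0,T]; ℝ^d), with canonical process ω. Let K : ℝ × ℝ^d → ℝ be a nonnegative smooth function with compact support contained in (−1, 0) × {y ∈ ℝ^d : ‖y‖ < 1} and with ∫_{ℝ×ℝ^d} K(r,y) dr dy = 1, and for ε > 0 set K^ε(r,y) := ε^{−d−2} K(r/ε², y/ε). Let u : ℝ × ℝ^d → ℝ be bounded and measurable such that for all real s ≤ t with t − s ≤ T and all x ∈ ℝ^d, sup_{P ∈ 𝒫} ∫ u(t, x + ω(t−s)) dP(ω) ≤ u(s, x). Define the mollification u^ε(s,x) := ∫_{ℝ×ℝ^d} u(s − r,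 x − y) K^ε(r,y) dr dy. Then for every ε > 0, u^ε satisfies the same inequality: sup_{P ∈ 𝒫} ∫ u^ε(t, x + ω(t−s)) dP(ω) ≤ u^ε(s, x) for all s ≤ t with t − s ≤ T and all x ∈ ℝ^d. Moreover, if g : ℝ^d → ℝ is bounded measurable with u(s,x) ≥ g(x) for all (s,x), then u^ε(s,x) ≥ g^ε(x) := ∫ g(x − y) K^ε(r,y) dr dy for all (s,x). -/
open MeasureTheory

private lemma real_iSup2_le {ι : Type*} {S : Set ι} {F : ι → ℝ} {C : ℝ}
    (hC : 0 ≤ C) (h : ∀ i ∈ S, F i ≤ C) : (⨆ i ∈ S, F i) ≤ C :=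
  Real.iSup_le (fun i => Real.iSup_le (fun hi => h i hi) hC) hC

private lemma real_le_iSup2 {ι : Type*} {S : Set ι} {F : ι → ℝ} {C : ℝ}
    (hC : 0 ≤ C) (h : ∀ i ∈ S, F i ≤ C) {i : ι} (hi : i ∈ S) :
    F i ≤ ⨆ j ∈ S, F j := by
  have hbdd : BddAbove (Set.range fun j => ⨆ _ : j ∈ S, F j) := by
    refine ⟨C, ?_⟩
    rintro _ ⟨j, rfl⟩
    exact Real.iSup_le (fun hj => h j hj) hC
  haveI : Nonempty (i ∈ S) := ⟨hi⟩
  calc F i = ⨆ _ : i ∈ S, F i := (ciSup_const).symm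
    _ ≤ ⨆ j ∈ S, F j := le_ciSup hbdd i

private lemma real_iSup2_nonneg {ι : Type*} {S : Set ι} {F : ι → ℝ} {C : ℝ}
    (hC : 0 ≤ C) (h : ∀ i ∈ S, F i ≤ C) {i₀ : ι} (hi₀ : i₀ ∉ S) :
    0 ≤ ⨆ j ∈ S, F j := by
  have hbdd : BddAbove (Set.range fun j => ⨆ _ : j ∈ S, F j) := by
    refine ⟨C, ?_⟩
    rintro _ ⟨j, rfl⟩
    exact Real.iSup_le (fun hj => h j hj) hC
  haveI : IsEmpty (i₀ ∈ S) := ⟨hi₀⟩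
  calc (0:ℝ) = ⨆ _ : i₀ ∈ S, F i₀ := by rw [iSup_of_empty', Real.sSup_empty]
    _ ≤ ⨆ j ∈ S, F j := le_ciSup hbdd i₀

set_option maxHeartbeats 1000000 in
set_option synthInstance.maxHeartbeats 400000 in
/-- Lemma 3.4 (abstract form): mollification in `(t,x)` by a nonnegative kernel
preserves the nonlinear supermartingale property and the obstacle inequality. -/
theorem mollification_preserves_supermartingale_and_obstacle
    {d : ℕ} (T : ℝ) (hT : 0 < T) (ε : ℝ) (hε : 0 < ε)
    [MeasurableSpace C(Set.Icc (0:ℝ) T, EuclideanSpace ℝ (Fin d))]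
    [BorelSpace C(Set.Icc (0:ℝ) T, EuclideanSpace ℝ (Fin d))]
    (PP : Set (Measure C(Set.Icc (0:ℝ) T, EuclideanSpace ℝ (Fin d)))) (hPP : PP.Nonempty)
    (hprob : ∀ P ∈ PP, IsProbabilityMeasure P)
    (K : ℝ × EuclideanSpace ℝ (Fin d) → ℝ) (hKsmooth : ContDiff ℝ (⊤ : ℕ∞) K)
    (hKnonneg : ∀ q, 0 ≤ K q)
    (hKsupp : tsupport K ⊆ Set.Ioo (-1 : ℝ) 0 ×ˢ Metric.ball (0 : EuclideanSpace ℝ (Fin d)) 1)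
    (hKint : ∫ q : ℝ × EuclideanSpace ℝ (Fin d), K q = 1)
    (Kε : ℝ × EuclideanSpace ℝ (Fin d) → ℝ)
    (hKε : ∀ (r : ℝ) (y : EuclideanSpace ℝ (Fin d)),
      Kε (r, y) = ε ^ (-(d : ℝ) - 2) * K (r / ε ^ 2, ε⁻¹ • y))
    (u : ℝ → EuclideanSpace ℝ (Fin d) → ℝ)
    (hum : Measurable (Function.uncurry u)) (Cu : ℝ) (hub : ∀ s x, |u s x| ≤ Cu)
    (hsmg : ∀ (s t : ℝ) (hst : s ≤ t) (hTs : t - s ≤ T) (x : EuclideanSpace ℝ (Fin d)),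
      (⨆ P ∈ PP, ∫ ω, u t (x + ω ⟨t - s, sub_nonneg.mpr hst, hTs⟩) ∂P) ≤ u s x)
    (uε : ℝ → EuclideanSpace ℝ (Fin d) → ℝ)
    (huε : ∀ s x, uε s x = ∫ q : ℝ × EuclideanSpace ℝ (Fin d), u (s - q.1) (x - q.2) * Kε q)
    (g : EuclideanSpace ℝ (Fin d) → ℝ) (hgm : Measurable g) (Cg : ℝ) (hgb : ∀ x, |g x| ≤ Cg)
    (hobs : ∀ s x, g x ≤ u s x)
    (gε : EuclideanSpace ℝ (Fin d) → ℝ)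
    (hgε : ∀ x, gε x = ∫ q : ℝ × EuclideanSpace ℝ (Fin d), g (x - q.2) * Kε q) :
    (∀ (s t : ℝ) (hst : s ≤ t) (hTs : t - s ≤ T) (x : EuclideanSpace ℝ (Fin d)),
      (⨆ P ∈ PP, ∫ ω, uε t (x + ω ⟨t - s, sub_nonneg.mpr hst, hTs⟩) ∂P) ≤ uε s x) ∧
    (∀ (s : ℝ) (x : EuclideanSpace ℝ (Fin d)), gε x ≤ uε s x) := by
  have hCu0 : 0 ≤ Cu := (abs_nonneg _).trans (hub 0 0)
  have hε2 : (0:ℝ) < ε ^ 2 := by positivity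
  -- basic facts about Kε
  have hKε' : ∀ q : ℝ × EuclideanSpace ℝ (Fin d),
      Kε q = ε ^ (-(d : ℝ) - 2) * K (q.1 / ε ^ 2, ε⁻¹ • q.2) := fun q => hKε q.1 q.2
  have hcnn : (0:ℝ) ≤ ε ^ (-(d : ℝ) - 2) := Real.rpow_nonneg hε.le _
  have hcne : (ε:ℝ) ^ (-(d : ℝ) - 2) ≠ 0 := (Real.rpow_pos_of_pos hε _).ne'
  have hKεnn : ∀ q, 0 ≤ Kε q := fun q => by
    rw [hKε']; exact mul_nonneg hcnn (hKnonneg _)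
  have hKεcont : Continuous Kε := by
    have : Kε = fun q : ℝ × EuclideanSpace ℝ (Fin d) =>
        ε ^ (-(d : ℝ) - 2) * K (q.1 / ε ^ 2, ε⁻¹ • q.2) := funext hKε'
    rw [this]
    exact continuous_const.mul (hKsmooth.continuous.comp
      ((continuous_fst.div_const _).prodMk (continuous_snd.const_smul ε⁻¹)))
  have hKεsupp : HasCompactSupport Kε := by
    apply HasCompactSupport.intro
      (K := Set.Icc (-ε ^ 2) 0 ×ˢ Metric.closedBall (0 : EuclideanSpace ℝ (Fin d)) ε)
    · exact isCompact_Icc.prod (isCompact_closedBall _ _)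
    · intro q hq
      by_contra h0
      have hKne : K (q.1 / ε ^ 2, ε⁻¹ • q.2) ≠ 0 := by
        intro h; apply h0; rw [hKε', h, mul_zero]
      have hmem := hKsupp (subset_tsupport K hKne)
      obtain ⟨⟨h1, h2⟩, h3⟩ := hmem
      apply hq
      constructor
      · constructor
        · have := (lt_div_iff₀ hε2).mp h1
          linarith
        · have := (div_lt_iff₀ hε2).mp h2
          linarith
      · rw [Metric.mem_closedBall, dist_zero_right]
        rw [Metric.mem_ball, dist_zero_right, norm_smul, norm_inv, Real.norm_eq_abs,
          abs_of_pos hε] at h3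
        have := (inv_mul_lt_iff₀ hε).mp h3
        linarith [this]
  have hKεint : Integrable Kε := hKεcont.integrable_of_hasCompactSupport hKεsupp
  have hKεmeas : Measurable Kε := hKεcont.measurable
  -- integrability of bounded × Kε
  have hint_bdd : ∀ (v : ℝ × EuclideanSpace ℝ (Fin d) → ℝ), Measurable v → ∀ C : ℝ,
      (∀ q, |v q| ≤ C) → Integrable (fun q => v q * Kε q) := by
    intro v hv C hC
    refine (hKεint.const_mul C).mono' ((hv.mul hKεmeas).aestronglyMeasurable)
      (Filter.Eventually.of_forall fun q => ?_)
    rw [Real.norm_eq_abs, abs_mul, abs_of_nonneg (hKεnn q)]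
    exact mul_le_mul_of_nonneg_right (hC q) (hKεnn q)
  -- bound on integrals against probability measures
  have hPbound : ∀ (P : Measure C(Set.Icc (0:ℝ) T, EuclideanSpace ℝ (Fin d))), P ∈ PP →
      ∀ f : C(Set.Icc (0:ℝ) T, EuclideanSpace ℝ (Fin d)) → ℝ,
      (∀ ω, |f ω| ≤ Cu) → (∫ ω, f ω ∂P) ≤ Cu := by
    intro P hP f hf
    haveI := hprob P hP
    have h := norm_integral_le_of_norm_le_const (μ := P) (C := Cu) (f := f)
      (Filter.Eventually.of_forall fun ω => by rw [Real.norm_eq_abs]; exact hf ω)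
    rw [Real.norm_eq_abs, probReal_univ, mul_one] at h
    exact (le_abs_self _).trans h
  -- zero measure is not in PP
  have h0PP : (0 : Measure C(Set.Icc (0:ℝ) T, EuclideanSpace ℝ (Fin d))) ∉ PP := by
    intro h
    have h1 : (0 : Measure C(Set.Icc (0:ℝ) T, EuclideanSpace ℝ (Fin d))) Set.univ = 1 :=
      (hprob 0 h).measure_univ
    rw [Measure.coe_zero, Pi.zero_apply] at h1
    exact zero_ne_one h1
  -- u is nonnegative
  have hu0 : ∀ s x, 0 ≤ u s x := by
    intro s x
    have h0T : s - s ≤ T := by rw [sub_self]; exact hT.le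
    refine le_trans ?_ (hsmg s s le_rfl h0T x)
    exact real_iSup2_nonneg hCu0 (fun P hP => hPbound P hP _ (fun ω => hub _ _)) h0PP
  have huε0 : ∀ s x, 0 ≤ uε s x := by
    intro s x
    rw [huε]
    exact integral_nonneg fun q => mul_nonneg (hu0 _ _) (hKεnn q)
  -- evaluation map measurable
  have hev : ∀ τ : Set.Icc (0:ℝ) T,
      Measurable (fun ω : C(Set.Icc (0:ℝ) T, EuclideanSpace ℝ (Fin d)) => ω τ) :=
    fun τ => (continuous_eval_const τ).measurable
  constructor
  · intro s t hst hTs x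
    set τ : Set.Icc (0:ℝ) T := ⟨t - s, sub_nonneg.mpr hst, hTs⟩ with hτdef
    have key : ∀ P ∈ PP, (∫ ω, uε t (x + ω τ) ∂P) ≤ uε s x := by
      intro P hP
      haveI := hprob P hP
      set F : C(Set.Icc (0:ℝ) T, EuclideanSpace ℝ (Fin d)) → ℝ × EuclideanSpace ℝ (Fin d) → ℝ :=
        fun ω q => u (t - q.1) (x + ω τ - q.2) * Kε q with hF
      have hFmeas : Measurable (Function.uncurry F) := by
        have h1 : Measurable (fun p : C(Set.Icc (0:ℝ) T, EuclideanSpace ℝ (Fin d)) ×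
            (ℝ × EuclideanSpace ℝ (Fin d)) => (t - p.2.1, x + p.1 τ - p.2.2)) :=
          (measurable_const.sub measurable_snd.fst).prodMk
            ((measurable_const.add ((hev τ).comp measurable_fst)).sub measurable_snd.snd)
        exact (hum.comp h1).mul (hKεmeas.comp measurable_snd)
      have hFint : Integrable (Function.uncurry F) (P.prod volume) := by
        refine (Integrable.mul_prod (f := fun _ => Cu) (g := Kε)
          (integrable_const Cu) hKεint).mono' hFmeas.aestronglyMeasurable
          (Filter.Eventually.of_forall fun p => ?_)
        simp only [Function.uncurry, hF, Real.norm_eq_abs, abs_mul, abs_of_nonneg (hKεnn p.2)]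
        exact mul_le_mul_of_nonneg_right (hub _ _) (hKεnn p.2)
      haveI : SFinite P := inferInstance
      calc ∫ ω, uε t (x + ω τ) ∂P
          = ∫ ω, (∫ q : ℝ × EuclideanSpace ℝ (Fin d), F ω q) ∂P := by
            simp only [huε, hF]
        _ = ∫ q : ℝ × EuclideanSpace ℝ (Fin d), ∫ ω, F ω q ∂P := integral_integral_swap hFint
        _ ≤ ∫ q : ℝ × EuclideanSpace ℝ (Fin d), u (s - q.1) (x - q.2) * Kε q := by
            refine integral_mono hFint.integral_prod_right
              (hint_bdd _ (hum.comp ((measurable_const.sub measurable_fst).prodMk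
                (measurable_const.sub measurable_snd))) Cu (fun q => hub _ _)) (fun q => ?_)
            have hrw : (∫ ω, F ω q ∂P)
                = (∫ ω, u (t - q.1) ((x - q.2) + ω τ) ∂P) * Kε q := by
              simp only [hF, add_sub_right_comm]
              rw [integral_mul_const]
            rw [hrw]
            refine mul_le_mul_of_nonneg_right ?_ (hKεnn q)
            have hst' : s - q.1 ≤ t - q.1 := by linarith
            have hTs' : (t - q.1) - (s - q.1) ≤ T := by linarith
            have h := hsmg (s - q.1) (t - q.1) hst' hTs' (x - q.2)
            have hτeq : τ = ⟨(t - q.1) - (s - q.1), sub_nonneg.mpr hst', hTs'⟩ :=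
              Subtype.ext (by show t - s = t - q.1 - (s - q.1); ring)
            rw [hτeq]
            refine le_trans ?_ h
            exact real_le_iSup2
              (F := fun P' => ∫ ω, u (t - q.1)
                (x - q.2 + ω ⟨t - q.1 - (s - q.1), sub_nonneg.mpr hst', hTs'⟩) ∂P')
              hCu0 (fun P' hP' => hPbound P' hP' _ (fun ω => hub _ _)) hP
        _ = uε s x := (huε s x).symm
    exact real_iSup2_le (huε0 s x) key
  · intro s x
    rw [hgε, huε]
    refine integral_mono
      (hint_bdd _ (hgm.comp (measurable_const.sub measurable_snd)) Cg (fun q => hgb _))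
      (hint_bdd _ (hum.comp ((measurable_const.sub measurable_fst).prodMk
        (measurable_const.sub measurable_snd))) Cu (fun q => hub _ _))
      (fun q => mul_le_mul_of_nonneg_right (hobs _ _) (hKεnn q))
end

section
/- Let (Ω, F, P) be a probability space with a discrete-time filtration (F_k)_{k = 0,…,n}, and let D be a nonempty finite index set. For each a ∈ D let (X^a_k)_{k ≤ n} be an adapted integrable process and (M^a_k)_{k ≤ n} a martingale with M^a_0 = 0. Then for every a ∈ D and every stopping time τ with values in {0, 1, …, n}: E[ X^a_τ ] ≤ E[ max_{b ∈ D} max_{0 ≤ k ≤ n} ( X^b_k − M^b_k ) ]. Consequently, sup_{a ∈ D} sup_{τ} E[ X^a_τ ] ≤ E[ max_{b ∈ D} max_{0 ≤ k ≤ n} ( X^b_k − M^b_k ) ]. -/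
/-!
By optional stopping `E[M^a_τ] = E[M^a_0] = 0`, so `E[X^a_τ] = E[X^a_τ - M^a_τ]`, and the
integrand is pathwise below the maximum of `X^b_k - M^b_k` over all `b` and `k ≤ n`.
-/

open MeasureTheory

namespace MeasureTheory

theorem Integrable.finset_sup' {α ι β : Type*} [MeasurableSpace α] {μ : Measure α}
    [NormedAddCommGroup β] [Lattice β] [HasSolidNorm β] [IsOrderedAddMonoid β]
    {s : Finset ι} (hs : s.Nonempty) {f : ι → α → β} (hf : ∀ i ∈ s, Integrable (f i) μ) :
    Integrable (fun x => s.sup' hs fun i => f i x) μ := by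
  simpa only [← Finset.sup'_apply] using
    Finset.sup'_induction hs f (p := (Integrable · μ)) (fun _ hf _ hg => hf.sup hg) hf

theorem integral_le_integral_finset_sup' {α ι : Type*} [MeasurableSpace α] {μ : Measure α}
    {s : Finset ι} (hs : s.Nonempty) {f : ι → α → ℝ} (hf : ∀ i ∈ s, Integrable (f i) μ)
    {i : ι} (hi : i ∈ s) : ∫ x, f i x ∂μ ≤ ∫ x, s.sup' hs (fun j => f j x) ∂μ :=
  integral_mono (hf i hi) (Integrable.finset_sup' hs hf) fun x => Finset.le_sup' (f · x) hi

variable {Ω : Type*} {m0 : MeasurableSpace Ω} {μ : Measure Ω} {𝒢 : Filtration ℕ m0}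
  [SigmaFiniteFiltration μ 𝒢]

theorem Martingale.integral_stoppedValue_eq_integral_zero {f : ℕ → Ω → ℝ}
    (hf : Martingale f 𝒢 μ) {τ : Ω → WithTop ℕ} (hτ : IsStoppingTime 𝒢 τ) {N : ℕ}
    (hbdd : ∀ ω, τ ω ≤ N) : ∫ ω, stoppedValue f τ ω ∂μ = ∫ ω, f 0 ω ∂μ := by
  have h0 : IsStoppingTime 𝒢 (fun _ => ((0 : ℕ) : WithTop ℕ)) := isStoppingTime_const 𝒢 0
  have hle : (fun _ => ((0 : ℕ) : WithTop ℕ)) ≤ τ := fun _ => bot_le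
  have hsub : ∫ ω, f 0 ω ∂μ ≤ ∫ ω, stoppedValue f τ ω ∂μ :=
    hf.submartingale.expected_stoppedValue_mono h0 hτ hle hbdd
  have hsuper : ∫ ω, -f 0 ω ∂μ ≤ ∫ ω, -stoppedValue f τ ω ∂μ :=
    hf.neg.submartingale.expected_stoppedValue_mono h0 hτ hle hbdd
  rw [integral_neg, integral_neg] at hsuper
  linarith

theorem Martingale.integral_stopped_le_integral_sup'_sub {X M : ℕ → Ω → ℝ}
    (hX : ∀ k, Integrable (X k) μ) (hM : Martingale M 𝒢 μ) (hM0 : ∫ ω, M 0 ω ∂μ = 0)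
    {τ : Ω → ℕ} (hτ : IsStoppingTime 𝒢 fun ω => (τ ω : WithTop ℕ)) {n : ℕ} (hbdd : ∀ ω, τ ω ≤ n) :
    ∫ ω, X (τ ω) ω ∂μ ≤
      ∫ ω, (Finset.range (n + 1)).sup' Finset.nonempty_range_add_one
        (fun k => X k ω - M k ω) ∂μ := by
  have hbdd' : ∀ ω, (τ ω : WithTop ℕ) ≤ n := fun ω => by exact_mod_cast hbdd ω
  have hXτ := integrable_stoppedValue ℕ hτ hX hbdd'
  have hMτ := integrable_stoppedValue ℕ hτ hM.integrable hbdd'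
  have hmean : ∫ ω, stoppedValue M (fun ω => (τ ω : WithTop ℕ)) ω ∂μ = 0 := by
    rw [hM.integral_stoppedValue_eq_integral_zero hτ hbdd', hM0]
  calc ∫ ω, X (τ ω) ω ∂μ
      = ∫ ω, (stoppedValue X (fun ω => (τ ω : WithTop ℕ)) ω -
          stoppedValue M (fun ω => (τ ω : WithTop ℕ)) ω) ∂μ := by
        rw [integral_sub hXτ hMτ, hmean, sub_zero]
        rfl
    _ ≤ _ := integral_mono (hXτ.sub hMτ)
        (Integrable.finset_sup' _ fun k _ => (hX k).sub (hM.integrable k))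
        fun ω => Finset.le_sup' (fun k => X k ω - M k ω) (Finset.mem_range_succ_iff.2 (hbdd ω))

end MeasureTheory

theorem american_weak_duality_discrete_general
    {Ω : Type*} [mΩ : MeasurableSpace Ω] (P : Measure Ω) [IsProbabilityMeasure P]
    (n : ℕ) (ℱ : Filtration ℕ mΩ) {D : Type*} [Fintype D] [Nonempty D]
    (X M : D → ℕ → Ω → ℝ)
    (hXi : ∀ a k, Integrable (X a k) P)
    (hM : ∀ a, Martingale (M a) ℱ P) (hM0 : ∀ (a : D) (ω : Ω), M a 0 ω = 0) :
    (∀ (a : D) (τ : Ω → ℕ), IsStoppingTime ℱ (fun ω => (τ ω : WithTop ℕ)) → (∀ ω, τ ω ≤ n) →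
      ∫ ω, X a (τ ω) ω ∂P ≤
        ∫ ω, Finset.univ.sup' Finset.univ_nonempty (fun b : D =>
          (Finset.range (n + 1)).sup' Finset.nonempty_range_add_one
            (fun k => X b k ω - M b k ω)) ∂P) ∧
    (⨆ a : D, ⨆ τ : {τ : Ω → ℕ // IsStoppingTime ℱ (fun ω => (τ ω : WithTop ℕ)) ∧ ∀ ω, τ ω ≤ n},
        ∫ ω, X a (τ.1 ω) ω ∂P) ≤
      ∫ ω, Finset.univ.sup' Finset.univ_nonempty (fun b : D =>
        (Finset.range (n + 1)).sup' Finset.nonempty_range_add_one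
          (fun k => X b k ω - M b k ω)) ∂P := by
  have hweak : ∀ (a : D) (τ : Ω → ℕ), IsStoppingTime ℱ (fun ω => (τ ω : WithTop ℕ)) →
      (∀ ω, τ ω ≤ n) → ∫ ω, X a (τ ω) ω ∂P ≤
        ∫ ω, Finset.univ.sup' Finset.univ_nonempty (fun b : D =>
          (Finset.range (n + 1)).sup' Finset.nonempty_range_add_one
            (fun k => X b k ω - M b k ω)) ∂P := fun a τ hτ hbdd =>
    ((hM a).integral_stopped_le_integral_sup'_sub (hXi a) (by simp [hM0 a]) hτ hbdd).trans
      (integral_le_integral_finset_sup' _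
        (fun b _ => Integrable.finset_sup' _ fun k _ => (hXi b k).sub ((hM b).integrable k))
        (Finset.mem_univ a))
  have : Nonempty {τ : Ω → ℕ // IsStoppingTime ℱ (fun ω => (τ ω : WithTop ℕ)) ∧ ∀ ω, τ ω ≤ n} :=
    ⟨⟨fun _ => 0, isStoppingTime_const ℱ 0, fun _ => Nat.zero_le n⟩⟩
  exact ⟨hweak, ciSup_le fun a => ciSup_le fun τ => hweak a τ.1 τ.2.1 τ.2.2⟩

/-- Discrete-time weak duality for American options: penalizing each controlled
payoff process by a martingale started at `0` and taking a pathwise maximum over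
the finite control set and over time dominates the primal optimal
stopping/control value. -/
theorem american_weak_duality_discrete
    {Ω : Type*} [mΩ : MeasurableSpace Ω] (P : Measure Ω) [IsProbabilityMeasure P]
    (n : ℕ) (ℱ : Filtration ℕ mΩ) {D : Type*} [Fintype D] [Nonempty D]
    (X M : D → ℕ → Ω → ℝ)
    (hXa : ∀ a, Adapted ℱ (X a)) (hXi : ∀ a k, Integrable (X a k) P)
    (hM : ∀ a, Martingale (M a) ℱ P) (hM0 : ∀ (a : D) (ω : Ω), M a 0 ω = 0) :
    (∀ (a : D) (τ : Ω → ℕ), IsStoppingTime ℱ (fun ω => (τ ω : WithTop ℕ)) → (∀ ω, τ ω ≤ n) →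
      ∫ ω, X a (τ ω) ω ∂P ≤
        ∫ ω, Finset.univ.sup' Finset.univ_nonempty (fun b : D =>
          (Finset.range (n + 1)).sup' Finset.nonempty_range_add_one
            (fun k => X b k ω - M b k ω)) ∂P) ∧
    (⨆ a : D, ⨆ τ : {τ : Ω → ℕ // IsStoppingTime ℱ (fun ω => (τ ω : WithTop ℕ)) ∧ ∀ ω, τ ω ≤ n},
        ∫ ω, X a (τ.1 ω) ω ∂P) ≤
      ∫ ω, Finset.univ.sup' Finset.univ_nonempty (fun b : D =>
        (Finset.range (n + 1)).sup' Finset.nonempty_range_add_one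
          (fun k => X b k ω - M b k ω)) ∂P :=
  american_weak_duality_discrete_general (mΩ := mΩ) P n ℱ X M hXi hM hM0
end

section
/- Let T > 0, c ≥ 0, g ∈ ℝ, and let f : [0,T] → ℝ be continuous. Let w : [0,T] → ℝ be differentiable with w'(t) = −c·max(0, −w(t)) − f(t) for all t ∈ [0,T] and w(T) = g. Then for every t ∈ [0,T], w(t) = sup { e^{−∫_t^T a(s) ds} g + ∫_t^T e^{−∫_t^s a(r) dr} f(s) ds : a : [0,T] → [0,c] measurable }. -/
/-!
For a control `a` write `E(s) = exp (-∫_t^s a)`. The product `E w` is absolutely continuous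
and, by the equation, `(E w)' = E (w' - a w) = -E (f + c w⁻ + a w)` almost everywhere, so
integrating over `[t, T]` gives `w t = payoff a + ∫_t^T E (c w⁻ + a w)`. For `a ∈ [0, c]`
the integrand is nonnegative, because `-a w ≤ c w⁻`, and it vanishes for the feedback
control `a = c · 1{w < 0}`; hence `w t` is the largest payoff.
-/

open Set MeasureTheory intervalIntegral
open scoped NNReal

lemma Measurable.intervalIntegrable_of_abs_le {a : ℝ → ℝ} {K : ℝ} (ha : Measurable a)
    (hK : ∀ s, |a s| ≤ K) (x y : ℝ) : IntervalIntegrable a volume x y :=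
  intervalIntegrable_const.mono_fun' ha.aestronglyMeasurable (ae_of_all _ hK)

lemma lipschitzWith_integral_of_abs_le {a : ℝ → ℝ} {K : ℝ≥0} (ha : Measurable a)
    (hK : ∀ s, |a s| ≤ K) (t : ℝ) : LipschitzWith K fun s => ∫ r in t..s, a r := by
  have hint := ha.intervalIntegrable_of_abs_le hK
  refine LipschitzWith.of_dist_le_mul fun x y => ?_
  rw [Real.dist_eq, Real.dist_eq, integral_interval_sub_left (hint t x) (hint t y),
    ← Real.norm_eq_abs]
  exact norm_integral_le_of_norm_le_const fun s _ => hK s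

lemma lipschitzOnWith_exp_Iic_zero : LipschitzOnWith 1 Real.exp (Iic 0) :=
  (convex_Iic 0).lipschitzOnWith_of_nnnorm_hasDerivWithin_le
    (fun x _ => (Real.hasDerivAt_exp x).hasDerivWithinAt) fun x hx => by
      rw [← NNReal.coe_le_coe, coe_nnnorm, Real.norm_of_nonneg (Real.exp_pos x).le,
        NNReal.coe_one]
      exact Real.exp_le_one_iff.2 hx

lemma mul_max_zero_neg_add_mul_nonneg {a c : ℝ} (ha : a ∈ Icc 0 c) (v : ℝ) :
    0 ≤ c * max 0 (-v) + a * v := by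
  rcases le_total 0 v with hv | hv
  · exact add_nonneg (mul_nonneg (ha.1.trans ha.2) (le_max_left _ _)) (mul_nonneg ha.1 hv)
  · rw [max_eq_right (neg_nonneg.2 hv)]
    nlinarith [mul_nonneg (sub_nonneg.2 ha.2) (neg_nonneg.2 hv)]

noncomputable def discount (a : ℝ → ℝ) (t s : ℝ) : ℝ := Real.exp (-(∫ r in t..s, a r))

noncomputable def payoff (a f : ℝ → ℝ) (g t T : ℝ) : ℝ :=
  discount a t T * g + ∫ s in t..T, discount a t s * f s

section Payoff

variable {a f w w' : ℝ → ℝ} {c t T : ℝ}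

lemma Measurable.intervalIntegrable_of_mem_Icc (ha : Measurable a)
    (ha_mem : ∀ s, a s ∈ Icc 0 c) (x y : ℝ) : IntervalIntegrable a volume x y :=
  ha.intervalIntegrable_of_abs_le
    (fun s => (abs_of_nonneg (ha_mem s).1).trans_le (ha_mem s).2) x y

lemma lipschitzOnWith_discount (ha : Measurable a) (ha_mem : ∀ s, a s ∈ Icc 0 c) (t : ℝ) :
    LipschitzOnWith c.toNNReal (discount a t) (Ici t) := by
  have hA := (lipschitzWith_integral_of_abs_le ha (fun s => (abs_of_nonneg (ha_mem s).1).trans_le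
    ((ha_mem s).2.trans (Real.le_coe_toNNReal c))) t).neg
  have h := lipschitzOnWith_exp_Iic_zero.comp (hA.lipschitzOnWith (s := Ici t))
    fun s (hs : t ≤ s) => neg_nonpos.2 (integral_nonneg hs fun r _ => (ha_mem r).1)
  rw [one_mul] at h
  exact h

lemma hasDerivAt_discount {s : ℝ} (h : HasDerivAt (fun s => ∫ r in t..s, a r) (a s) s) :
    HasDerivAt (discount a t) (-(a s * discount a t s)) s := by
  unfold discount
  simpa [mul_comm] using h.neg.exp

theorem integral_discount_mul_eq_sub (htT : t ≤ T) (ha : Measurable a)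
    (ha_mem : ∀ s, a s ∈ Icc 0 c) (hw : ∀ s ∈ Icc t T, HasDerivWithinAt w (w' s) (Icc t T) s)
    (hw' : ContinuousOn w' (Icc t T)) :
    ∫ s in t..T, discount a t s * (w' s - a s * w s) = discount a t T * w T - w t := by
  obtain ⟨C, hC⟩ := isCompact_Icc.exists_bound_of_continuousOn hw'
  have hwL : LipschitzOnWith C.toNNReal w (uIcc t T) := by
    rw [uIcc_of_le htT]
    refine (convex_Icc t T).lipschitzOnWith_of_nnnorm_hasDerivWithin_le hw fun s hs => ?_
    rw [← NNReal.coe_le_coe, coe_nnnorm]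
    exact (hC s hs).trans (Real.le_coe_toNNReal C)
  have hEL : LipschitzOnWith c.toNNReal (discount a t) (uIcc t T) :=
    (lipschitzOnWith_discount ha ha_mem t).mono (by simp [uIcc_of_le htT, Icc_subset_Ici_self])
  have hAC : AbsolutelyContinuousOnInterval (fun s => discount a t s * w s) t T :=
    hEL.absolutelyContinuousOnInterval.fun_mul hwL.absolutelyContinuousOnInterval
  have hderiv : ∀ᵐ s, s ∈ uIoc t T →
      deriv (fun s => discount a t s * w s) s = discount a t s * (w' s - a s * w s) := by
    filter_upwards [(ha.intervalIntegrable_of_mem_Icc ha_mem t T).ae_hasDerivAt_integral,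
      Measure.ae_ne volume T] with s hA hsT hs
    rw [uIoc_of_le htT] at hs
    have hsIcc : s ∈ Icc t T := Ioc_subset_Icc_self hs
    have hwd : HasDerivAt w (w' s) s :=
      (hw s hsIcc).hasDerivAt (Icc_mem_nhds hs.1 (lt_of_le_of_ne hs.2 hsT))
    have hEd := hasDerivAt_discount (hA (uIcc_of_le htT ▸ hsIcc) t left_mem_uIcc)
    exact (hEd.fun_mul hwd).deriv.trans (by ring)
  rw [← integral_congr_ae hderiv, hAC.integral_deriv_eq_sub]
  simp [discount]

theorem eq_payoff_add_integral (htT : t ≤ T) (ha : Measurable a) (ha_mem : ∀ s, a s ∈ Icc 0 c)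
    (hf : ContinuousOn f (Icc t T))
    (hw : ∀ s ∈ Icc t T, HasDerivWithinAt w (-(c * max 0 (-w s)) - f s) (Icc t T) s) :
    w t = payoff a f (w T) t T +
      ∫ s in t..T, discount a t s * (c * max 0 (-w s) + a s * w s) := by
  have hwc : ContinuousOn w (Icc t T) := fun s hs => (hw s hs).continuousWithinAt
  have hw' : ContinuousOn (fun s => -(c * max 0 (-w s)) - f s) (Icc t T) := by fun_prop
  have hE : ContinuousOn (discount a t) (Icc t T) :=
    (lipschitzOnWith_discount ha ha_mem t).continuousOn.mono Icc_subset_Ici_self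
  have key := integral_discount_mul_eq_sub htT ha ha_mem hw hw'
  rw [← uIcc_of_le htT] at hwc hw' hE hf
  have hint₁ : IntervalIntegrable
      (fun s => discount a t s * (-(c * max 0 (-w s)) - f s - a s * w s)) volume t T :=
    (hw'.intervalIntegrable.sub
      ((ha.intervalIntegrable_of_mem_Icc ha_mem t T).mul_continuousOn hwc)).continuousOn_mul hE
  have hint₂ : IntervalIntegrable (fun s => discount a t s * f s) volume t T :=
    (hE.mul hf).intervalIntegrable
  have hgap : ∫ s in t..T, discount a t s * (c * max 0 (-w s) + a s * w s) =
      -((discount a t T * w T - w t) + ∫ s in t..T, discount a t s * f s) := by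
    rw [← key, ← integral_add hint₁ hint₂, ← intervalIntegral.integral_neg]
    exact integral_congr fun s _ => by ring
  rw [payoff, hgap]
  ring

lemma payoff_le (htT : t ≤ T) (ha : Measurable a) (ha_mem : ∀ s, a s ∈ Icc 0 c)
    (hf : ContinuousOn f (Icc t T))
    (hw : ∀ s ∈ Icc t T, HasDerivWithinAt w (-(c * max 0 (-w s)) - f s) (Icc t T) s) :
    payoff a f (w T) t T ≤ w t := by
  have hgap : 0 ≤ ∫ s in t..T, discount a t s * (c * max 0 (-w s) + a s * w s) :=
    integral_nonneg htT fun s _ =>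
      mul_nonneg (Real.exp_pos _).le (mul_max_zero_neg_add_mul_nonneg (ha_mem s) (w s))
  linarith [eq_payoff_add_integral htT ha ha_mem hf hw]

end Payoff

noncomputable def feedbackControl (c : ℝ) (S : Set ℝ) (w : ℝ → ℝ) : ℝ → ℝ :=
  (S ∩ {s | w s < 0}).indicator fun _ => c

section Feedback

variable {f w : ℝ → ℝ} {c t T : ℝ} {S : Set ℝ}

lemma feedbackControl_mem_Icc (hc : 0 ≤ c) (s : ℝ) : feedbackControl c S w s ∈ Icc 0 c := by
  classical
  rw [feedbackControl, indicator_apply]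
  split_ifs <;> simp [hc]

lemma measurable_feedbackControl (hS : MeasurableSet S) (hw : ContinuousOn w S) :
    Measurable (feedbackControl c S w) := by
  obtain ⟨u, hu, hpre⟩ := continuousOn_iff'.1 hw (Iio 0) isOpen_Iio
  refine measurable_const.indicator ?_
  rw [inter_comm]
  change MeasurableSet (w ⁻¹' Iio 0 ∩ S)
  rw [hpre]
  exact hu.measurableSet.inter hS

lemma mul_max_zero_neg_add_feedbackControl_mul {s : ℝ} (hs : s ∈ S) :
    c * max 0 (-w s) + feedbackControl c S w s * w s = 0 := by
  by_cases h : w s < 0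
  · simp [feedbackControl, hs, h, max_eq_right (neg_nonneg.2 h.le)]
  · simp [feedbackControl, h, max_eq_left (neg_nonpos.2 (not_lt.1 h))]

theorem payoff_feedbackControl (hc : 0 ≤ c) (htT : t ≤ T) (hf : ContinuousOn f (Icc t T))
    (hw : ∀ s ∈ Icc t T, HasDerivWithinAt w (-(c * max 0 (-w s)) - f s) (Icc t T) s) :
    payoff (feedbackControl c (Icc t T) w) f (w T) t T = w t := by
  have ha := measurable_feedbackControl (c := c) measurableSet_Icc
    fun s hs => (hw s hs).continuousWithinAt
  rw [eq_payoff_add_integral htT ha (feedbackControl_mem_Icc hc) hf hw, left_eq_add]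
  refine (integral_congr fun s hs => ?_).trans integral_zero
  rw [uIcc_of_le htT] at hs
  simp only [mul_max_zero_neg_add_feedbackControl_mul hs, mul_zero]

end Feedback

theorem hamilton_jacobi_verification_general
    (T c : ℝ) (hc : 0 ≤ c) (g : ℝ) (f : ℝ → ℝ)
    (hf : ContinuousOn f (Set.Icc 0 T)) (w : ℝ → ℝ)
    (hw : ∀ t ∈ Set.Icc (0:ℝ) T,
      HasDerivWithinAt w (-(c * max 0 (-w t)) - f t) (Set.Icc 0 T) t)
    (hwT : w T = g) :
    ∀ t ∈ Set.Icc (0:ℝ) T,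
      w t = sSup {v : ℝ | ∃ a : ℝ → ℝ, Measurable a ∧ (∀ s, a s ∈ Set.Icc 0 c) ∧
        v = Real.exp (-(∫ s in t..T, a s)) * g +
          ∫ s in t..T, Real.exp (-(∫ r in t..s, a r)) * f s} := by
  rintro t ⟨ht0, htT⟩
  subst hwT
  have hft : ContinuousOn f (Icc t T) := hf.mono (Icc_subset_Icc_left ht0)
  have hwt : ∀ s ∈ Icc t T, HasDerivWithinAt w (-(c * max 0 (-w s)) - f s) (Icc t T) s :=
    fun s hs => (hw s ⟨ht0.trans hs.1, hs.2⟩).mono (Icc_subset_Icc_left ht0)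
  refine (IsGreatest.csSup_eq ⟨?_, ?_⟩).symm
  · exact ⟨feedbackControl c (Icc t T) w,
      measurable_feedbackControl measurableSet_Icc fun s hs => (hwt s hs).continuousWithinAt,
      feedbackControl_mem_Icc hc, (payoff_feedbackControl hc htT hft hwt).symm⟩
  · rintro v ⟨a, ha, ha_mem, rfl⟩
    exact payoff_le htT ha ha_mem hft hwt

/-- Verification theorem for the pathwise Hamilton–Jacobi equation of Section
4.2: the solution of `w' + c·w⁻ + f = 0`, `w(T) = g`, coincides with the value
of the deterministic control problem over measurable discount-rate controls with
values in `[0,c]`. -/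
theorem hamilton_jacobi_verification
    (T c : ℝ) (hT : 0 < T) (hc : 0 ≤ c) (g : ℝ) (f : ℝ → ℝ)
    (hf : ContinuousOn f (Set.Icc 0 T)) (w : ℝ → ℝ)
    (hw : ∀ t ∈ Set.Icc (0:ℝ) T,
      HasDerivWithinAt w (-(c * max 0 (-w t)) - f t) (Set.Icc 0 T) t)
    (hwT : w T = g) :
    ∀ t ∈ Set.Icc (0:ℝ) T,
      w t = sSup {v : ℝ | ∃ a : ℝ → ℝ, Measurable a ∧ (∀ s, a s ∈ Set.Icc 0 c) ∧
        v = Real.exp (-(∫ s in t..T, a s)) * g +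
          ∫ s in t..T, Real.exp (-(∫ r in t..s, a r)) * f s} :=
  hamilton_jacobi_verification_general T c hc g f hf w hw hwT
end
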